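/- Let T₁ = [[1,0],[0,0]], T₂ = (1/2)[[1,1],[1,1]], T₃ = [[0,0],[0,1]] be 2×2 Hermitian matrices, and let ω = T₁⊗T₂ - T₂⊗T₂ + T₂⊗T₁ + T₃⊗T₃, a 4×4 Hermitian matrix. Then ω is not positive semidefinite; in fact ω has (1-√2)/2 as an eigenvalue. -/

import Mathlib

open Kronecker

noncomputable section

def T₁ : Matrix (Fin 2) (Fin 2) ℝ := !![1, 0; 0, 0]
def T₂ : Matrix (Fin 2) (Fin 2) ℝ := (1 / 2 : ℝ) • !![1, 1; 1, 1]
def T₃ : Matrix (Fin 2) (Fin 2) ℝ := !![0, 0; 0, 1]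

def ωPR : Matrix (Fin 2 × Fin 2) (Fin 2 × Fin 2) ℝ :=
  T₁ ⊗ₖ T₂ - T₂ ⊗ₖ T₂ + T₂ ⊗ₖ T₁ + T₃ ⊗ₖ T₃

namespace Matrix

variable {n R : Type*} [Fintype n] [CommRing R] [LinearOrder R] [IsStrictOrderedRing R]
  [StarRing R] [StarOrderedRing R]

theorem PosSemidef.nonneg_of_mulVec_eq_smul {A : Matrix n n R} (hA : A.PosSemidef)
    {μ : R} {v : n → R} (hv : v ≠ 0) (hμ : A *ᵥ v = μ • v) : 0 ≤ μ := by
  have hquad : 0 ≤ μ * (star v ⬝ᵥ v) := by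
    simpa [hμ, dotProduct_smul, smul_eq_mul] using hA.dotProduct_mulVec_nonneg v
  exact nonneg_of_mul_nonneg_left hquad (dotProduct_star_self_pos_iff.mpr hv)

end Matrix

/-- In the basis `(0,0), (0,1), (1,0), (1,1)` one has
`ωPR = ¼ [[3, 1, 1, -1], [1, 1, -1, -1], [1, -1, 1, -1], [-1, -1, -1, 3]]`. -/
def ωPREigenvector : Fin 2 × Fin 2 → ℝ :=
  fun p => !![1, -(1 + √2); -(1 + √2), -1] p.1 p.2

theorem ωPREigenvector_ne_zero : ωPREigenvector ≠ 0 := fun h => by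
  simpa [ωPREigenvector] using congrFun h (0, 0)

theorem ωPR_mulVec_ωPREigenvector :
    ωPR.mulVec ωPREigenvector = ((1 - √2) / 2) • ωPREigenvector := by
  have hsqrt : √2 * √2 = 2 := Real.mul_self_sqrt zero_le_two
  ext ⟨i, j⟩
  fin_cases i <;> fin_cases j <;>
    simp [ωPR, T₁, T₂, T₃, ωPREigenvector, Matrix.mulVec, dotProduct, Fintype.sum_prod_type,
      Fin.sum_univ_two] <;>
    linarith

theorem omega_not_posSemidef :
    ¬ ωPR.PosSemidef ∧
    ∃ v : Fin 2 × Fin 2 → ℝ, v ≠ 0 ∧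
      ωPR.mulVec v = ((1 - Real.sqrt 2) / 2) • v := by
  refine ⟨fun hpsd => ?_, ωPREigenvector, ωPREigenvector_ne_zero, ωPR_mulVec_ωPREigenvector⟩
  have hμ := hpsd.nonneg_of_mulVec_eq_smul ωPREigenvector_ne_zero ωPR_mulVec_ωPREigenvector
  linarith [Real.one_lt_sqrt_two]

end
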